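/- In the symmetric group on {1,…,72}, let σ₀ = (3,4)(2,7)(5,9)(60,61)(63,55)(57,58)(20,22)(21,27)(24,25)(11,13)(12,18)(15,16)(39,45)(43,42)(38,40)(30,31)(29,35)(32,34)(66,72)(65,68)(67,70)(48,49)(47,53)(50,52)(1,59)(62,64)(69,54)(51,6)(41,46)(8,10)(56,23)(36,71)(33,37)(17,44)(14,19)(26,28) and let σ₁ be the product of the twenty-four 3-cycles (3i+1, 3i+2, 3i+3) for i = 0,…,23. Then σ₀ is a fixed-point-free involution, σ₁³ = 1, and the subgroup generated by σ₀ and σ₁ acts transitively on {1,…,72}. -/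

import Mathlib

/-!
Once σ₀ and σ₁ are known to fix every n > 72, all three claims are finite computations: an
identity between such permutations is checked on {0, …, 72}, and transitivity follows by
exploring the orbit of 1 breadth-first, which exhausts the 72 darts after 14 steps
(the eccentricity of dart 1 in the Schreier graph).
-/

open MulAction Equiv

section OrbitExploration

variable {G α : Type*} [Group G] [MulAction G α]

theorem exists_mem_smul_eq_of_subset_orbit (H : Subgroup G) {s : Set α} {x : α}
    (hs : s ⊆ orbit H x) {a b : α} (ha : a ∈ s) (hb : b ∈ s) : ∃ g ∈ H, g • a = b := by
  rw [← orbit_eq_iff.mpr (hs ha)] at hs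
  obtain ⟨g, hg⟩ := hs hb
  exact ⟨g, g.2, hg⟩

variable [DecidableEq α]

def orbitStep (gens : List G) (s : Finset α) : Finset α :=
  s ∪ s.biUnion fun x => (gens.map (· • x)).toFinset

theorem iterate_orbitStep_subset_orbit (H : Subgroup G) {gens : List G}
    (hgens : ∀ g ∈ gens, g ∈ H) (x : α) (k : ℕ) :
    ↑((orbitStep gens)^[k] {x}) ⊆ orbit H x := by
  induction k with
  | zero => simp
  | succ k ih =>
    rw [Function.iterate_succ_apply']
    intro y hy
    simp only [orbitStep, Finset.coe_union, Set.mem_union, Finset.mem_coe, Finset.mem_biUnion,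
      List.mem_toFinset, List.mem_map] at hy
    obtain hy | ⟨z, hz, g, hg, rfl⟩ := hy
    · exact ih hy
    · exact mem_orbit_of_mem_orbit (⟨g, hgens g hg⟩ : H) (ih hz)

end OrbitExploration

section FixingSubgroup

variable {α : Type*} [DecidableEq α]

theorem Equiv.swap_mem_fixingSubgroup {s : Set α} {a b : α} (ha : a ∉ s) (hb : b ∉ s) :
    swap a b ∈ fixingSubgroup (Perm α) s := by
  rw [mem_fixingSubgroup_iff]
  intro y hy
  exact swap_apply_of_ne_of_ne (ne_of_mem_of_not_mem hy ha) (ne_of_mem_of_not_mem hy hb)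

theorem List.formPerm_mem_fixingSubgroup {s : Set α} {l : List α} (hl : ∀ a ∈ l, a ∉ s) :
    l.formPerm ∈ fixingSubgroup (Equiv.Perm α) s := by
  rw [mem_fixingSubgroup_iff]
  intro y hy
  exact List.formPerm_apply_of_notMem fun h => hl y h hy

end FixingSubgroup

theorem Equiv.Perm.eq_one_of_mem_fixingSubgroup_Ioi {N : ℕ} {g : Perm ℕ}
    (hg : g ∈ fixingSubgroup (Perm ℕ) (Set.Ioi N))
    (h : ∀ n ∈ Finset.range (N + 1), g n = n) : g = 1 := by
  ext n
  rcases le_or_gt n N with hn | hn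
  · exact h n (Finset.mem_range_succ_iff.mpr hn)
  · exact (mem_fixingSubgroup_iff _).mp hg n hn

set_option maxRecDepth 10000 in
/-- Permutation representation for the truncated cube (modular group, 72 darts): σ₀ is a fixed-point-free involution
on {1,…,72}, σ₁^3 = 1, and the subgroup generated by σ₀ and σ₁ acts transitively on
{1,…,72}. -/
theorem truncated_cube_permutation_representation (σ₀ σ₁ : Equiv.Perm ℕ)
    (hσ₀ : σ₀ = Equiv.swap 3 4 *
      Equiv.swap 2 7 *
      Equiv.swap 5 9 *
      Equiv.swap 60 61 *
      Equiv.swap 63 55 *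
      Equiv.swap 57 58 *
      Equiv.swap 20 22 *
      Equiv.swap 21 27 *
      Equiv.swap 24 25 *
      Equiv.swap 11 13 *
      Equiv.swap 12 18 *
      Equiv.swap 15 16 *
      Equiv.swap 39 45 *
      Equiv.swap 43 42 *
      Equiv.swap 38 40 *
      Equiv.swap 30 31 *
      Equiv.swap 29 35 *
      Equiv.swap 32 34 *
      Equiv.swap 66 72 *
      Equiv.swap 65 68 *
      Equiv.swap 67 70 *
      Equiv.swap 48 49 *
      Equiv.swap 47 53 *
      Equiv.swap 50 52 *
      Equiv.swap 1 59 *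
      Equiv.swap 62 64 *
      Equiv.swap 69 54 *
      Equiv.swap 51 6 *
      Equiv.swap 41 46 *
      Equiv.swap 8 10 *
      Equiv.swap 56 23 *
      Equiv.swap 36 71 *
      Equiv.swap 33 37 *
      Equiv.swap 17 44 *
      Equiv.swap 14 19 *
      Equiv.swap 26 28)
    (hσ₁ : σ₁ = ([1, 2, 3] : List ℕ).formPerm *
      ([4, 5, 6] : List ℕ).formPerm *
      ([7, 8, 9] : List ℕ).formPerm *
      ([10, 11, 12] : List ℕ).formPerm *
      ([13, 14, 15] : List ℕ).formPerm *
      ([16, 17, 18] : List ℕ).formPerm *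
      ([19, 20, 21] : List ℕ).formPerm *
      ([22, 23, 24] : List ℕ).formPerm *
      ([25, 26, 27] : List ℕ).formPerm *
      ([28, 29, 30] : List ℕ).formPerm *
      ([31, 32, 33] : List ℕ).formPerm *
      ([34, 35, 36] : List ℕ).formPerm *
      ([37, 38, 39] : List ℕ).formPerm *
      ([40, 41, 42] : List ℕ).formPerm *
      ([43, 44, 45] : List ℕ).formPerm *
      ([46, 47, 48] : List ℕ).formPerm *
      ([49, 50, 51] : List ℕ).formPerm *
      ([52, 53, 54] : List ℕ).formPerm *
      ([55, 56, 57] : List ℕ).formPerm *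
      ([58, 59, 60] : List ℕ).formPerm *
      ([61, 62, 63] : List ℕ).formPerm *
      ([64, 65, 66] : List ℕ).formPerm *
      ([67, 68, 69] : List ℕ).formPerm *
      ([70, 71, 72] : List ℕ).formPerm) :
    σ₀ * σ₀ = 1 ∧ (∀ x ∈ Finset.Icc 1 72, σ₀ x ≠ x) ∧ σ₁ ^ 3 = 1 ∧
    ∀ a ∈ Finset.Icc 1 72, ∀ b ∈ Finset.Icc 1 72,
      ∃ g ∈ Subgroup.closure ({σ₀, σ₁} : Set (Equiv.Perm ℕ)), g a = b := by
  have h₀ : σ₀ ∈ fixingSubgroup (Equiv.Perm ℕ) (Set.Ioi 72) := by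
    rw [hσ₀]
    repeat' with_reducible apply Subgroup.mul_mem
    all_goals exact swap_mem_fixingSubgroup (by simp) (by simp)
  have h₁ : σ₁ ∈ fixingSubgroup (Equiv.Perm ℕ) (Set.Ioi 72) := by
    rw [hσ₁]
    -- at default transparency `apply` would also split each `formPerm` into its swaps
    repeat' with_reducible apply Subgroup.mul_mem
    all_goals exact List.formPerm_mem_fixingSubgroup (by simp)
  have hgens : ∀ g ∈ [σ₀, σ₁], g ∈ Subgroup.closure {σ₀, σ₁} := by
    simpa using ⟨Subgroup.subset_closure (by simp), Subgroup.subset_closure (by simp)⟩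
  have hreach : Finset.Icc 1 72 ⊆ (orbitStep [σ₀, σ₁])^[14] {1} := by
    subst hσ₀ hσ₁
    decide
  subst hσ₀ hσ₁
  refine ⟨Perm.eq_one_of_mem_fixingSubgroup_Ioi (Subgroup.mul_mem _ h₀ h₀) (by decide),
    by decide,
    Perm.eq_one_of_mem_fixingSubgroup_Ioi (Subgroup.pow_mem _ h₁ 3) (by decide),
    fun a ha b hb => ?_⟩
  exact exists_mem_smul_eq_of_subset_orbit _
    ((Finset.coe_subset.mpr hreach).trans (iterate_orbitStep_subset_orbit _ hgens 1 14)) ha hb
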